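/- There exists a unique family (a_n)_{n≥0} of elements of the polynomial ring ℚ[g₂,g₃] such that the formal Laurent series ℘ := p⁻² + Σ_{n≥0} a_n pⁿ in ℚ[g₂,g₃]((p)) satisfies (℘′)² = 4℘³ − g₂·℘ − g₃, where ℘′ denotes the derivative of ℘ with respect to p. -/

import Mathlib

/-!
Write `℘ = p⁻² + v` with `v` a power series. Multiplying the equation by `p⁶` turns it into
`E(v) = 0` for a power series `E(v)` divisible by `p²`, whose coefficient of `p ^ (n + 2)` is
`N_n(v) − (12 + 4n) vₙ` with `N_n(v)` depending only on `v₀, …, v_{n-1}`. As `12 + 4n` is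
invertible over `ℚ`, the equation is a strong recursion for the coefficients of `v`, which has
exactly one solution.
-/

noncomputable section

/-- The polynomial ring `ℚ[g₂, g₃]`, with `g₂ = X 0` and `g₃ = X 1`. -/
abbrev RQ : Type := MvPolynomial (Fin 2) ℚ

/-- The variable `g₂`. -/
def gTwo : RQ := MvPolynomial.X 0

/-- The variable `g₃`. -/
def gThree : RQ := MvPolynomial.X 1

/-- The derivation `d/dp` on the ring of formal Laurent series `ℚ[g₂,g₃]((p))`. -/
def lsDeriv (f : LaurentSeries RQ) : LaurentSeries RQ where
  coeff n := (n + 1 : ℤ) • f.coeff (n + 1)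
  isPWO_support' := by
    have h : Function.support (fun n : ℤ => (n + 1 : ℤ) • f.coeff (n + 1)) ⊆
        (fun n : ℤ => n - 1) '' f.support := by
      intro n hn
      refine ⟨n + 1, ?_, by ring⟩
      intro h0
      apply hn
      simp only [Function.mem_support, not_not] at *
      rw [h0, smul_zero]
    exact (f.isPWO_support.image_of_monotone
      (fun a b hab => sub_le_sub_right hab 1)).mono h

/-- The formal Laurent series `℘ := p⁻² + Σ_{n≥0} aₙ pⁿ` attached to
a family `(aₙ)` of elements of `ℚ[g₂,g₃]`. -/
def wp (a : ℕ → RQ) : LaurentSeries RQ :=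
  HahnSeries.single (-2 : ℤ) (1 : RQ) +
    HahnSeries.ofPowerSeries ℤ RQ (PowerSeries.mk a)

section CausalRecursion

variable {α : Type*} [Nonempty α]

def causalFix (Φ : (ℕ → α) → ℕ → α) : ℕ → α :=
  Nat.strongRec fun n rec => Φ (fun m => if h : m < n then rec m h else Classical.arbitrary α) n

theorem existsUnique_eq_of_causal (Φ : (ℕ → α) → ℕ → α)
    (hΦ : ∀ a b n, (∀ m < n, a m = b m) → Φ a n = Φ b n) :
    ∃! a : ℕ → α, ∀ n, a n = Φ a n := by
  have hfix : ∀ n, causalFix Φ n = Φ (causalFix Φ) n := fun n => by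
    rw [causalFix, Nat.strongRec_eq]
    exact hΦ _ _ n fun m hm => by simp [hm, causalFix]
  refine ⟨causalFix Φ, hfix, fun b hb => funext fun n => ?_⟩
  induction n using Nat.strong_induction_on with
  | _ n ih => rw [hb n, hfix n, hΦ b (causalFix Φ) n ih]

end CausalRecursion

open PowerSeries

section Derivative

variable {R : Type*} [CommSemiring R]

theorem coeff_X_mul_derivative (f : R⟦X⟧) (n : ℕ) :
    coeff n (X * d⁄dX R f) = n • coeff n f := by
  cases n with
  | zero => simp
  | succ k => rw [coeff_succ_X_mul, coeff_derivative, nsmul_eq_mul, Nat.cast_succ, mul_comm]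

theorem X_pow_dvd_X_mul_derivative {n : ℕ} {f : R⟦X⟧} (h : X ^ n ∣ f) :
    X ^ n ∣ X * d⁄dX R f := by
  rw [X_pow_dvd_iff] at h ⊢
  intro m hm
  rw [coeff_X_mul_derivative, h m hm, smul_zero]

end Derivative

section WeierstrassRecursion

variable {R : Type*} [CommRing R] (g₂ g₃ : R)

/-- `p⁶ ((℘′)² − (4℘³ − g₂℘ − g₃))` for `℘ = p⁻² + v`. -/
def weierstrassDefect (v : R⟦X⟧) : R⟦X⟧ :=
  (X ^ 3 * d⁄dX R v - 2) ^ 2 -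
    (4 * (1 + X ^ 2 * v) ^ 3 - C g₂ * X ^ 4 * (1 + X ^ 2 * v) - C g₃ * X ^ 6)

def weierstrassDefectTail (v : R⟦X⟧) : R⟦X⟧ :=
  X ^ 6 * (d⁄dX R v) ^ 2 - 12 * X ^ 4 * v ^ 2 - 4 * X ^ 6 * v ^ 3
    + C g₂ * X ^ 4 + C g₂ * X ^ 6 * v + C g₃ * X ^ 6

theorem weierstrassDefect_eq (v : R⟦X⟧) :
    weierstrassDefect g₂ g₃ v =
      weierstrassDefectTail g₂ g₃ v - X ^ 2 * (12 * v + 4 * (X * d⁄dX R v)) := by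
  unfold weierstrassDefect weierstrassDefectTail
  ring

theorem X_sq_dvd_weierstrassDefect (v : R⟦X⟧) : X ^ 2 ∣ weierstrassDefect g₂ g₃ v := by
  rw [weierstrassDefect_eq]
  refine dvd_sub ⟨X ^ 4 * (d⁄dX R v) ^ 2 - 12 * X ^ 2 * v ^ 2 - 4 * X ^ 4 * v ^ 3
    + C g₂ * X ^ 2 + C g₂ * X ^ 4 * v + C g₃ * X ^ 4, ?_⟩ (dvd_mul_right _ _)
  unfold weierstrassDefectTail
  ring

theorem coeff_weierstrassDefect_add_two (v : R⟦X⟧) (n : ℕ) :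
    coeff (n + 2) (weierstrassDefect g₂ g₃ v) =
      coeff (n + 2) (weierstrassDefectTail g₂ g₃ v) - (12 + 4 * n) • coeff n v := by
  rw [weierstrassDefect_eq, map_sub, coeff_X_pow_mul, ← map_ofNat C 12, ← map_ofNat C 4,
    map_add, coeff_C_mul, coeff_C_mul, coeff_X_mul_derivative]
  simp only [nsmul_eq_mul]
  push_cast
  ring

theorem X_pow_dvd_weierstrassDefectTail_sub {n : ℕ} {v w : R⟦X⟧} (h : X ^ n ∣ v - w) :
    X ^ (n + 3) ∣ weierstrassDefectTail g₂ g₃ v - weierstrassDefectTail g₂ g₃ w := by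
  have hD : X ^ n ∣ X * d⁄dX R v - X * d⁄dX R w := by
    simpa only [map_sub, mul_sub] using X_pow_dvd_X_mul_derivative h
  have hdiff : weierstrassDefectTail g₂ g₃ v - weierstrassDefectTail g₂ g₃ w =
      X ^ 3 * (X * d⁄dX R v - X * d⁄dX R w) * (X ^ 2 * (d⁄dX R v + d⁄dX R w)) +
        X ^ 3 * (v - w) *
          (C g₂ * X ^ 3 - 12 * X * (v + w) - 4 * X ^ 3 * (v ^ 2 + v * w + w ^ 2)) := by
    unfold weierstrassDefectTail
    ring
  rw [hdiff, show X ^ (n + 3) = X ^ 3 * X ^ n by ring]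
  exact dvd_add ((mul_dvd_mul_left _ hD).mul_right _) ((mul_dvd_mul_left _ h).mul_right _)

theorem coeff_weierstrassDefectTail_congr {n : ℕ} {v w : R⟦X⟧}
    (h : ∀ m < n, coeff m v = coeff m w) :
    coeff (n + 2) (weierstrassDefectTail g₂ g₃ v) =
      coeff (n + 2) (weierstrassDefectTail g₂ g₃ w) := by
  have hvw : X ^ n ∣ v - w := X_pow_dvd_iff.mpr fun m hm => by rw [map_sub, h m hm, sub_self]
  rw [← sub_eq_zero, ← map_sub]
  exact X_pow_dvd_iff.mp (X_pow_dvd_weierstrassDefectTail_sub g₂ g₃ hvw) _ (by omega)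

theorem weierstrassDefect_eq_zero_iff (v : R⟦X⟧) :
    weierstrassDefect g₂ g₃ v = 0 ↔
      ∀ n, coeff (n + 2) (weierstrassDefect g₂ g₃ v) = 0 := by
  refine ⟨fun h n => by rw [h, map_zero], fun h => ext fun k => ?_⟩
  rw [map_zero]
  rcases k with _ | _ | n
  · exact X_pow_dvd_iff.mp (X_sq_dvd_weierstrassDefect g₂ g₃ v) 0 (by omega)
  · exact X_pow_dvd_iff.mp (X_sq_dvd_weierstrassDefect g₂ g₃ v) 1 (by omega)
  · exact h n

theorem existsUnique_weierstrassDefect_mk_eq_zero [Algebra ℚ R] :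
    ∃! a : ℕ → R, weierstrassDefect g₂ g₃ (mk a) = 0 := by
  refine (existsUnique_congr fun a => ?_).mpr (existsUnique_eq_of_causal
    (fun a n => (12 + 4 * n : ℚ)⁻¹ • coeff (n + 2) (weierstrassDefectTail g₂ g₃ (mk a)))
    fun a b n h => ?_)
  · rw [weierstrassDefect_eq_zero_iff]
    refine forall_congr' fun n => ?_
    rw [coeff_weierstrassDefect_add_two, sub_eq_zero, coeff_mk,
      eq_inv_smul_iff₀ (by positivity), ← Nat.cast_smul_eq_nsmul ℚ]
    push_cast
    exact eq_comm
  · rw [coeff_weierstrassDefectTail_congr g₂ g₃ (w := mk b)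
      fun m hm => by simp only [coeff_mk, h m hm]]

end WeierstrassRecursion

open HahnSeries

local notation "φ" => ofPowerSeries ℤ RQ

theorem lsDeriv_eq_derivative (f : LaurentSeries RQ) :
    lsDeriv f = LaurentSeries.derivative ℤ f := by
  ext n
  simp [lsDeriv]

theorem lsDeriv_add (f g : LaurentSeries RQ) : lsDeriv (f + g) = lsDeriv f + lsDeriv g := by
  simp only [lsDeriv_eq_derivative, map_add]

theorem lsDeriv_single (n : ℤ) (r : RQ) : lsDeriv (single n r) = single (n - 1) (n • r) := by
  simp [lsDeriv_eq_derivative]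

theorem lsDeriv_ofPowerSeries (f : RQ⟦X⟧) :
    lsDeriv (φ f) = φ (d⁄dX RQ f) := by
  ext n : 2
  show (n + 1) • (φ f).coeff (n + 1) = _
  rw [coeff_coe, coeff_coe]
  rcases n with k | k
  · rw [Int.ofNat_eq_natCast, if_neg (by omega), if_neg (by omega), Int.natAbs_natCast,
      show ((k : ℤ) + 1).natAbs = k + 1 by omega, coeff_derivative, zsmul_eq_mul]
    push_cast
    ring
  · rcases k with _ | k
    · simp
    · rw [if_pos (Int.negSucc_lt_zero _), if_pos (by rw [Int.negSucc_eq]; omega), smul_zero]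

theorem ofPowerSeries_X_pow_six_mul_wp_equation (a : ℕ → RQ) :
    φ (X ^ 6) * (lsDeriv (wp a) ^ 2 -
      (4 * wp a ^ 3 - HahnSeries.C gTwo * wp a - HahnSeries.C gThree)) =
    φ (weierstrassDefect gTwo gThree (mk a)) := by
  have hwp : φ X ^ 2 * wp a = 1 + φ X ^ 2 * φ (mk a) := by
    rw [← map_pow, ofPowerSeries_X_pow, wp, mul_add, single_mul_single]
    norm_num
  have hderiv : φ X ^ 3 * lsDeriv (wp a) = φ X ^ 3 * φ (d⁄dX RQ (mk a)) - 2 := by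
    rw [wp, lsDeriv_add, lsDeriv_single, lsDeriv_ofPowerSeries, ← map_pow, ofPowerSeries_X_pow,
      mul_add, single_mul_single, sub_eq_add_neg, add_comm]
    norm_num [single_zero_ofNat, sub_eq_add_neg]
  simp only [weierstrassDefect, map_sub, map_mul, map_pow, map_add, map_one, map_ofNat,
    ofPowerSeries_C]
  linear_combination (φ X ^ 3 * lsDeriv (wp a) + (φ X ^ 3 * φ (d⁄dX RQ (mk a)) - 2)) * hderiv
    - (4 * (φ X ^ 4 * wp a ^ 2 + φ X ^ 2 * wp a * (1 + φ X ^ 2 * φ (mk a))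
      + (1 + φ X ^ 2 * φ (mk a)) ^ 2) - HahnSeries.C gTwo * φ X ^ 4) * hwp

theorem wp_equation_iff (a : ℕ → RQ) :
    lsDeriv (wp a) ^ 2 = 4 * wp a ^ 3 - HahnSeries.C gTwo * wp a - HahnSeries.C gThree ↔
      weierstrassDefect gTwo gThree (mk a) = 0 := by
  have hX : φ (X ^ 6) ≠ 0 :=
    (map_ne_zero_iff _ ofPowerSeries_injective).mpr (pow_ne_zero _ X_ne_zero)
  rw [← sub_eq_zero, ← mul_right_inj' hX, mul_zero, ofPowerSeries_X_pow_six_mul_wp_equation,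
    map_eq_zero_iff _ ofPowerSeries_injective]

theorem statement0 :
    ∃! a : ℕ → RQ,
      (lsDeriv (wp a)) ^ 2 =
        4 * (wp a) ^ 3 - (HahnSeries.C gTwo : LaurentSeries RQ) * wp a -
          (HahnSeries.C gThree : LaurentSeries RQ) := by
  simpa only [wp_equation_iff] using existsUnique_weierstrassDefect_mk_eq_zero gTwo gThree
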